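/- (Stationary points attain zero loss.) Let m ≥ 1, let b ∈ ℝ^m have nonnegative entries, and let u ∈ ℂ^m satisfy the stationarity (fixed-point) condition u = ũ, where ũ is the phase-matched synthesis of u with magnitudes b. Then |(F u)_i| = b_i for every i = 0,…,m−1; consequently f(u) = 0, so u is a global minimizer of the nonnegative loss f. -/

import Mathlib

/-- The `m`-point discrete Fourier transform of `w` (entries indexed `0, …, m-1`):
`(F w)_i = ∑_{l=0}^{m-1} w_l · exp(-2πι i l / m)`. -/
noncomputable def dft (m : ℕ) (w : ℕ → ℂ) (i : ℕ) : ℂ :=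
  ∑ l ∈ Finset.range m,
    w l * Complex.exp (-((2 : ℂ) * (Real.pi : ℂ) * Complex.I * (i : ℂ) * (l : ℂ)) / (m : ℂ))

/-- The phase function: `sgn(w) = w / |w|` for `w ≠ 0` and `sgn(0) = 1`. -/
noncomputable def csgn (w : ℂ) : ℂ :=
  if w = 0 then 1 else w / (‖w‖ : ℂ)

/-- The phase-matched synthesis of `u ∈ ℂ^m` with target magnitudes `b`:
`ũ_l = (1/m) ∑_{i=0}^{m-1} exp(2πι i l / m) · b_i · sgn((F u)_i)`. -/
noncomputable def utilde (m : ℕ) (b : ℕ → ℝ) (u : ℕ → ℂ) (l : ℕ) : ℂ :=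
  ((m : ℂ))⁻¹ * ∑ i ∈ Finset.range m,
    Complex.exp ((2 : ℂ) * (Real.pi : ℂ) * Complex.I * (i : ℂ) * (l : ℂ) / (m : ℂ)) *
      (b i : ℂ) * csgn (dft m u i)

/-- The amplitude loss `f(u) = (1/(2m)) ∑_{i<m} (|(F u)_i| - b_i)²`. -/
noncomputable def floss (m : ℕ) (b : ℕ → ℝ) (u : ℕ → ℂ) : ℝ :=
  (1 / (2 * m) : ℝ) * ∑ i ∈ Finset.range m, (‖dft m u i‖ - b i) ^ 2

/-!
A stationary point is the inverse DFT of the vector `b · sgn(F u)`, so by Fourier inversion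
`F u = b · sgn(F u)`; since `|sgn| = 1` and `b ≥ 0`, this forces `|F u| = b`.
-/

open Complex Finset
open scoped Real

theorem IsPrimitiveRoot.sum_range_zpow_pow_eq_ite {K : Type*} [Field K] {ζ : K} {m : ℕ}
    (hζ : IsPrimitiveRoot ζ m) (k : ℤ) :
    ∑ l ∈ range m, (ζ ^ k) ^ l = if (m : ℤ) ∣ k then (m : K) else 0 := by
  split_ifs with hdvd
  · simp [(hζ.zpow_eq_one_iff_dvd k).mpr hdvd]
  · have hne : ζ ^ k - 1 ≠ 0 := sub_ne_zero.mpr fun h ↦ hdvd ((hζ.zpow_eq_one_iff_dvd k).mp h)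
    have hpow : (ζ ^ k) ^ m = 1 := by
      rw [← zpow_natCast, ← zpow_mul, mul_comm, zpow_mul, hζ.zpow_eq_one, one_zpow]
    have := geom_sum_mul (ζ ^ k) m
    rw [hpow, sub_self] at this
    exact (mul_eq_zero.mp this).resolve_right hne

theorem sum_range_exp_mul_exp_neg_eq_ite {m i j : ℕ} (hi : i < m) (hj : j < m) :
    ∑ l ∈ range m, exp (2 * π * I * j * l / m) * exp (-(2 * π * I * i * l) / m) =
      if j = i then (m : ℂ) else 0 := by
  have hm : m ≠ 0 := by omega
  have hterm (l : ℕ) : exp (2 * π * I * j * l / m) * exp (-(2 * π * I * i * l) / m) =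
      (exp (2 * π * I / m) ^ ((j : ℤ) - i)) ^ l := by
    rw [← exp_int_mul, ← exp_nat_mul, ← exp_add]
    congr 1
    push_cast
    ring
  have hdvd : (m : ℤ) ∣ (j : ℤ) - i ↔ j = i := by
    refine ⟨fun h ↦ ?_, fun h ↦ by simp [h]⟩
    have := Int.eq_zero_of_abs_lt_dvd h (abs_sub_lt_iff.mpr ⟨by omega, by omega⟩)
    omega
  simp_rw [hterm, (isPrimitiveRoot_exp m hm).sum_range_zpow_pow_eq_ite, hdvd]

noncomputable def idft (m : ℕ) (c : ℕ → ℂ) (l : ℕ) : ℂ :=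
  (m : ℂ)⁻¹ * ∑ i ∈ range m, exp (2 * π * I * i * l / m) * c i

theorem dft_idft {m i : ℕ} (c : ℕ → ℂ) (hi : i < m) : dft m (idft m c) i = c i := by
  have hm : (m : ℂ) ≠ 0 := Nat.cast_ne_zero.mpr (by omega)
  calc dft m (idft m c) i
      = (m : ℂ)⁻¹ * ∑ j ∈ range m, c j *
          ∑ l ∈ range m, exp (2 * π * I * j * l / m) * exp (-(2 * π * I * i * l) / m) := by
        simp only [dft, idft, mul_sum, sum_mul]
        rw [sum_comm]
        exact sum_congr rfl fun _ _ ↦ sum_congr rfl fun _ _ ↦ by ring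
    _ = (m : ℂ)⁻¹ * ∑ j ∈ range m, c j * if j = i then (m : ℂ) else 0 := by
        congr 1
        exact sum_congr rfl fun j hj ↦ by
          rw [sum_range_exp_mul_exp_neg_eq_ite hi (mem_range.mp hj)]
    _ = c i := by
        simp only [mul_ite, mul_zero, sum_ite_eq', mem_range.mpr hi, if_true]
        field_simp

theorem dft_congr {m : ℕ} {u v : ℕ → ℂ} (h : ∀ l < m, u l = v l) (i : ℕ) :
    dft m u i = dft m v i :=
  sum_congr rfl fun l hl ↦ by rw [h l (mem_range.mp hl)]

theorem utilde_eq_idft (m : ℕ) (b : ℕ → ℝ) (u : ℕ → ℂ) :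
    utilde m b u = idft m fun i ↦ b i * csgn (dft m u i) := by
  funext l
  simp only [utilde, idft, mul_assoc]

theorem norm_csgn (w : ℂ) : ‖csgn w‖ = 1 := by
  by_cases h : w = 0 <;> simp [csgn, h]

theorem norm_dft_eq_of_eq_utilde {m : ℕ} {b : ℕ → ℝ} {u : ℕ → ℂ} (hb : ∀ i, 0 ≤ b i)
    (hstat : ∀ l < m, u l = utilde m b u l) {i : ℕ} (hi : i < m) : ‖dft m u i‖ = b i := by
  have hfix : dft m u i = b i * csgn (dft m u i) :=
    calc dft m u i = dft m (utilde m b u) i := dft_congr hstat i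
      _ = b i * csgn (dft m u i) := by rw [utilde_eq_idft, dft_idft _ hi]
  rw [hfix, norm_mul, norm_csgn, norm_real, Real.norm_of_nonneg (hb i), mul_one]

theorem floss_nonneg (m : ℕ) (b : ℕ → ℝ) (u : ℕ → ℂ) : 0 ≤ floss m b u :=
  mul_nonneg (by positivity) (sum_nonneg fun _ _ ↦ sq_nonneg _)

theorem floss_eq_zero_of_norm_dft_eq {m : ℕ} {b : ℕ → ℝ} {u : ℕ → ℂ}
    (h : ∀ i < m, ‖dft m u i‖ = b i) : floss m b u = 0 := by
  rw [floss, sum_eq_zero fun i hi ↦ by rw [h i (mem_range.mp hi), sub_self, zero_pow two_ne_zero],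
    mul_zero]

theorem stmt13_general (m : ℕ) (b : ℕ → ℝ) (hb : ∀ i, 0 ≤ b i) (u : ℕ → ℂ)
    (hstat : ∀ l < m, u l = utilde m b u l) :
    (∀ i < m, ‖dft m u i‖ = b i) ∧
      floss m b u = 0 ∧
      ∀ v : ℕ → ℂ, floss m b u ≤ floss m b v := by
  have hnorm : ∀ i < m, ‖dft m u i‖ = b i := fun i hi ↦ norm_dft_eq_of_eq_utilde hb hstat hi
  have hzero := floss_eq_zero_of_norm_dft_eq hnorm
  exact ⟨hnorm, hzero, fun v ↦ hzero ▸ floss_nonneg m b v⟩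

/-- Stationary points attain zero loss: if `u = ũ` (the fixed-point condition
`∂f(u) = u - ũ = 0`), then `|(F u)_i| = b_i` for all `i < m`, hence `f(u) = 0` and `u` is
a global minimizer of the nonnegative loss `f`. -/
theorem stmt13 (m : ℕ) (hm : 1 ≤ m) (b : ℕ → ℝ) (hb : ∀ i, 0 ≤ b i) (u : ℕ → ℂ)
    (hstat : ∀ l < m, u l = utilde m b u l) :
    (∀ i < m, ‖dft m u i‖ = b i) ∧
      floss m b u = 0 ∧
      ∀ v : ℕ → ℂ, floss m b u ≤ floss m b v :=
  stmt13_general m b hb u hstat
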